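/- arXiv:2411.02277 — 2 statements merged into one kernel-verified Lean document; each statement's English description precedes it below -/
import Mathlib

section
/- Lemma 3.2(c): for every α ∈ (0,1), every partition 0 = t_0 < ⋯ < t_N = T, every 1 ≤ n ≤ N, and every integer m with 0 ≤ m ≤ ⌊1/α⌋, one has Σ_{j=1}^{n} P^{n,j}_α · k_{1+mα−α}(t_j) ≤ k_{1+mα}(t_n). -/
/-!
The Riemann–Liouville kernels satisfy `k_{1-α} * k_β = k_{1+β-α}`. Splitting this convolution
integral along the partition and applying Chebyshev's integral inequality on each step to the
oppositely monotone factors `k_{1-α}(t_j - ·)` and `k_β` (here `β = mα ≤ 1`) gives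
`k_{1+β-α}(t_j) ≤ ∑_{i ≤ j} K^{j,i} (k_{1+β}(t_i) - k_{1+β}(t_{i-1}))`. The complementary kernels
are nonnegative (the `K^{j,i}` increase in `i`) and satisfy `∑_{j ≥ i} P^{n,j} K^{j,i} = 1`, so
multiplying by `P^{n,j}`, summing over `j` and exchanging the sums leaves a telescoping sum equal to
`k_{1+β}(t_n)`. For `m = 0` the same argument runs with `k_{1-α}(t_j) ≤ K^{j,1}` and `k_1 = 1`.
-/

/-- The kernel `k_β(s) = s^(β-1)/Γ(β)`. -/
noncomputable def kker (β s : ℝ) : ℝ := s ^ (β - 1) / Real.Gamma β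

/-- The discrete L1 kernels `K^{n,j}_{1-α}`. -/
noncomputable def Kd (α : ℝ) (t : ℕ → ℝ) (n j : ℕ) : ℝ :=
  (kker (2 - α) (t n - t (j - 1)) - kker (2 - α) (t n - t j)) / (t j - t (j - 1))

/-- The complementary discrete kernels `P^{n,i}_α`, defined by downward recursion. -/
noncomputable def Pd (α : ℝ) (t : ℕ → ℝ) (n i : ℕ) : ℝ :=
  if i = n then 1 / Kd α t n n
  else (1 / Kd α t i i) *
    ∑ j ∈ (Finset.Ioc i n).attach,
      Pd α t n j.1 * (Kd α t j.1 (i + 1) - Kd α t j.1 i)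
termination_by n - i
decreasing_by
  have h := Finset.mem_Ioc.mp j.2
  omega

open Finset MeasureTheory

section Kernel

variable {β s : ℝ}

lemma kker_pos (hβ : 0 < β) (hs : 0 < s) : 0 < kker β s :=
  div_pos (Real.rpow_pos_of_pos hs _) (Real.Gamma_pos_of_pos hβ)

lemma kker_zero (hβ : β ≠ 1) : kker β 0 = 0 := by
  rw [kker, Real.zero_rpow (sub_ne_zero.mpr hβ), zero_div]

lemma kker_one (s : ℝ) : kker 1 s = 1 := by
  simp [kker]

lemma kker_antitoneOn (hβ0 : 0 < β) (hβ1 : β ≤ 1) : AntitoneOn (kker β) (Set.Ioi 0) :=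
  fun _ hx _ _ hxy => div_le_div_of_nonneg_right
    (Real.rpow_le_rpow_of_nonpos hx hxy (by linarith)) (Real.Gamma_pos_of_pos hβ0).le

lemma kker_one_add_eq (β : ℝ) : kker (1 + β) = fun s => s ^ β / Real.Gamma (1 + β) := by
  funext s
  rw [kker, add_sub_cancel_left]

lemma hasDerivAt_kker_one_add (hβ : 0 < β) (hs : 0 < s) :
    HasDerivAt (kker (1 + β)) (kker β s) s := by
  rw [kker_one_add_eq]
  refine ((Real.hasDerivAt_rpow_const (Or.inl hs.ne')).div_const _).congr_deriv ?_
  rw [kker, add_comm 1 β, Real.Gamma_add_one hβ.ne']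
  field_simp [(Real.Gamma_pos_of_pos hβ).ne']

lemma integral_kker (hβ : 0 < β) (a b : ℝ) :
    ∫ s in a..b, kker β s = kker (1 + β) b - kker (1 + β) a := by
  simp only [kker, intervalIntegral.integral_div, add_sub_cancel_left]
  rw [integral_rpow (Or.inl (by linarith)), sub_add_cancel, add_comm 1 β,
    Real.Gamma_add_one hβ.ne']
  field_simp [(Real.Gamma_pos_of_pos hβ).ne']

lemma integral_kker_sub (hβ : 0 < β) (τ a b : ℝ) :
    ∫ s in a..b, kker β (τ - s) = kker (1 + β) (τ - a) - kker (1 + β) (τ - b) := by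
  rw [intervalIntegral.integral_comp_sub_left (kker β), integral_kker hβ]

lemma intervalIntegrable_kker (hβ : 0 < β) (a b : ℝ) : IntervalIntegrable (kker β) volume a b :=
  (intervalIntegral.intervalIntegrable_rpow' (by linarith)).div_const _

lemma exists_kker_one_add_sub_eq {a b : ℝ} (hβ : 0 < β) (ha : 0 ≤ a) (hab : a < b) :
    ∃ ξ ∈ Set.Ioo a b, kker (1 + β) b - kker (1 + β) a = (b - a) * kker β ξ := by
  have hcont : Continuous (kker (1 + β)) := by
    rw [kker_one_add_eq]
    exact (Real.continuous_rpow_const hβ.le).div_const _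
  obtain ⟨ξ, hξ, h⟩ := exists_hasDerivAt_eq_slope _ _ hab hcont.continuousOn
    fun x hx => hasDerivAt_kker_one_add hβ (ha.trans_lt hx.1)
  exact ⟨ξ, hξ, by rw [h, mul_div_cancel₀ _ (sub_ne_zero.mpr hab.ne')]⟩

end Kernel

section Convolution

variable {a b τ : ℝ}

lemma integral_rpow_mul_sub_rpow (ha : 0 < a) (hb : 0 < b) (hτ : 0 < τ) :
    ∫ s in 0..τ, s ^ (b - 1) * (τ - s) ^ (a - 1) =
      τ ^ (b + a - 1) * (Real.Gamma b * Real.Gamma a / Real.Gamma (b + a)) := by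
  apply Complex.ofReal_injective
  have hB := Complex.betaIntegral_scaled b a hτ
  rw [Complex.betaIntegral_eq_Gamma_mul_div _ _ (by simpa) (by simpa)] at hB
  rw [← intervalIntegral.integral_ofReal]
  push_cast
  rw [Complex.ofReal_cpow hτ.le, ← Complex.Gamma_ofReal, ← Complex.Gamma_ofReal,
    ← Complex.Gamma_ofReal]
  push_cast
  rw [← hB]
  refine intervalIntegral.integral_congr fun s hs => ?_
  rw [Set.uIcc_of_le hτ.le] at hs
  rw [Complex.ofReal_cpow hs.1, Complex.ofReal_cpow (sub_nonneg.mpr hs.2)]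
  push_cast
  rfl

lemma integral_kker_sub_mul_kker (ha : 0 < a) (hb : 0 < b) (hτ : 0 < τ) :
    ∫ s in 0..τ, kker a (τ - s) * kker b s = kker (a + b) τ := by
  have hΓa := (Real.Gamma_pos_of_pos ha).ne'
  have hΓb := (Real.Gamma_pos_of_pos hb).ne'
  have hΓab := (Real.Gamma_pos_of_pos (add_pos ha hb)).ne'
  simp only [kker, div_mul_div_comm, intervalIntegral.integral_div]
  simp only [mul_comm ((τ - _) ^ (a - 1))]
  rw [integral_rpow_mul_sub_rpow ha hb hτ, add_comm b a]
  field_simp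

-- A nonzero interval integral forces integrability.
lemma intervalIntegrable_kker_sub_mul_kker (ha : 0 < a) (hb : 0 < b) (hτ : 0 < τ) :
    IntervalIntegrable (fun s => kker a (τ - s) * kker b s) volume 0 τ :=
  intervalIntegral.intervalIntegrable_of_integral_ne_zero <| by
    rw [integral_kker_sub_mul_kker ha hb hτ]
    exact (kker_pos (add_pos ha hb) hτ).ne'

end Convolution

-- `g ξ` is the mean value of `g`; the estimate integrates `(f x - f ξ) * (g x - g ξ) ≤ 0`.
lemma integral_mul_le_of_monotoneOn_of_antitoneOn {f g : ℝ → ℝ} {a b ξ : ℝ} (hab : a ≤ b)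
    (hf : IntervalIntegrable f volume a b) (hg : IntervalIntegrable g volume a b)
    (hfg : IntervalIntegrable (fun x => f x * g x) volume a b)
    (hfm : MonotoneOn f (Set.Ioo a b)) (hgm : AntitoneOn g (Set.Ioo a b))
    (hξ : ξ ∈ Set.Ioo a b) (hgξ : ∫ x in a..b, g x = (b - a) * g ξ) :
    ∫ x in a..b, f x * g x ≤ g ξ * ∫ x in a..b, f x := by
  have hpt : ∀ x ∈ Set.Ioo a b, f x * g x ≤ f x * g ξ + f ξ * (g x - g ξ) := by
    intro x hx
    have : (f x - f ξ) * (g x - g ξ) ≤ 0 := by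
      rcases le_total x ξ with h | h
      · exact mul_nonpos_of_nonpos_of_nonneg (sub_nonpos.mpr (hfm hx hξ h))
          (sub_nonneg.mpr (hgm hx hξ h))
      · exact mul_nonpos_of_nonneg_of_nonpos (sub_nonneg.mpr (hfm hξ hx h))
          (sub_nonpos.mpr (hgm hξ hx h))
    linarith
  have hrhs : IntervalIntegrable (fun x => f x * g ξ + f ξ * (g x - g ξ)) volume a b :=
    (hf.mul_const _).add ((hg.sub intervalIntegrable_const).const_mul _)
  calc ∫ x in a..b, f x * g x
      ≤ ∫ x in a..b, (f x * g ξ + f ξ * (g x - g ξ)) := by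
        refine intervalIntegral.integral_mono_ae_restrict hab hfg hrhs ?_
        rw [← Measure.restrict_congr_set Ioo_ae_eq_Icc]
        exact ae_restrict_of_forall_mem measurableSet_Ioo hpt
    _ = g ξ * ∫ x in a..b, f x := by
        rw [intervalIntegral.integral_add (hf.mul_const _)
            ((hg.sub intervalIntegrable_const).const_mul _),
          intervalIntegral.integral_mul_const, intervalIntegral.integral_const_mul,
          intervalIntegral.integral_sub hg intervalIntegrable_const,
          intervalIntegral.integral_const, hgξ, smul_eq_mul]
        ring

lemma integral_kker_sub_mul_kker_le {β γ τ a b : ℝ} (hβ0 : 0 < β) (hβ1 : β ≤ 1)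
    (hγ0 : 0 < γ) (hγ1 : γ ≤ 1) (ha : 0 ≤ a) (hab : a < b) (hb : b ≤ τ) :
    ∫ s in a..b, kker γ (τ - s) * kker β s ≤
      (∫ s in a..b, kker γ (τ - s)) / (b - a) * (kker (1 + β) b - kker (1 + β) a) := by
  obtain ⟨ξ, hξ, hslope⟩ := exists_kker_one_add_sub_eq hβ0 ha hab
  have hτ : 0 < τ := by linarith
  have hf : IntervalIntegrable (fun s => kker γ (τ - s)) volume a b := by
    simpa using (intervalIntegrable_kker hγ0 (τ - a) (τ - b)).comp_sub_left τ
  have hfg : IntervalIntegrable (fun s => kker γ (τ - s) * kker β s) volume a b :=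
    (intervalIntegrable_kker_sub_mul_kker hγ0 hβ0 hτ).mono_set <| by
      rw [Set.uIcc_of_le hab.le, Set.uIcc_of_le hτ.le]
      exact Set.Icc_subset_Icc ha hb
  have hfm : MonotoneOn (fun s => kker γ (τ - s)) (Set.Ioo a b) :=
    fun x hx y hy hxy => kker_antitoneOn hγ0 hγ1 (show 0 < τ - y by linarith [hy.2])
      (show 0 < τ - x by linarith [hx.2]) (by linarith)
  have hgm : AntitoneOn (kker β) (Set.Ioo a b) :=
    (kker_antitoneOn hβ0 hβ1).mono fun x hx => ha.trans_lt hx.1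
  calc ∫ s in a..b, kker γ (τ - s) * kker β s
      ≤ kker β ξ * ∫ s in a..b, kker γ (τ - s) :=
        integral_mul_le_of_monotoneOn_of_antitoneOn hab.le hf (intervalIntegrable_kker hβ0 a b)
          hfg hfm hgm hξ (by rw [integral_kker hβ0, hslope])
    _ = _ := by
        rw [hslope]
        field_simp [(sub_pos.mpr hab).ne']

lemma sum_Icc_one_eq_sum_range {M : Type*} [AddCommMonoid M] (f : ℕ → M) (n : ℕ) :
    ∑ i ∈ Icc 1 n, f i = ∑ k ∈ range n, f (k + 1) := by
  rw [range_eq_Ico, sum_Ico_add', ← Ico_add_one_right_eq_Icc]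

lemma sum_Icc_one_sub {G : Type*} [AddCommGroup G] (f : ℕ → G) (n : ℕ) :
    ∑ i ∈ Icc 1 n, (f i - f (i - 1)) = f n - f 0 := by
  rw [sum_Icc_one_eq_sum_range]
  simp only [Nat.add_sub_cancel]
  exact sum_range_sub f n

section DiscreteKernel

variable {α : ℝ} {t : ℕ → ℝ} {n j : ℕ}

lemma Kd_eq_integral_div (hα : α < 1) :
    Kd α t n j = (∫ s in t (j - 1)..t j, kker (1 - α) (t n - s)) / (t j - t (j - 1)) := by
  rw [Kd, integral_kker_sub (by linarith), show 1 + (1 - α) = 2 - α by ring]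

lemma exists_Kd_eq_kker (hα : α < 1) (hj : t (j - 1) < t j) (hjn : t j ≤ t n) :
    ∃ ξ ∈ Set.Ioo (t n - t j) (t n - t (j - 1)), Kd α t n j = kker (1 - α) ξ := by
  obtain ⟨ξ, hξ, h⟩ := exists_kker_one_add_sub_eq (β := 1 - α) (by linarith)
    (sub_nonneg.mpr hjn) (sub_lt_sub_left hj (t n))
  refine ⟨ξ, hξ, ?_⟩
  rw [Kd, show 2 - α = 1 + (1 - α) by ring, h, sub_sub_sub_cancel_left,
    mul_div_cancel_left₀ _ (sub_pos.mpr hj).ne']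

lemma Kd_pos (hα : α < 1) (hj : t (j - 1) < t j) (hjn : t j ≤ t n) : 0 < Kd α t n j := by
  obtain ⟨ξ, hξ, h⟩ := exists_Kd_eq_kker hα hj hjn
  rw [h]
  exact kker_pos (by linarith) (by linarith [hξ.1])

lemma Kd_le_Kd_add_one (hα0 : 0 < α) (hα1 : α < 1) (hj : t (j - 1) < t j)
    (hj' : t j < t (j + 1)) (hjn : t (j + 1) ≤ t n) : Kd α t n j ≤ Kd α t n (j + 1) := by
  obtain ⟨ξ, hξ, h⟩ := exists_Kd_eq_kker hα1 hj (hj'.le.trans hjn)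
  obtain ⟨ξ', hξ', h'⟩ := exists_Kd_eq_kker (j := j + 1) hα1 hj' hjn
  rw [Nat.add_sub_cancel] at hξ'
  rw [h, h']
  exact kker_antitoneOn (by linarith) (by linarith) (show 0 < ξ' by linarith [hξ'.1])
    (show 0 < ξ by linarith [hξ.1]) (by linarith [hξ.1, hξ'.2])

lemma kker_le_Kd_one (hα0 : 0 < α) (hα1 : α < 1) (ht : StrictMonoOn t (Set.Iic n))
    (ht0 : t 0 = 0) (hn : 1 ≤ n) : kker (1 - α) (t n) ≤ Kd α t n 1 := by
  have h01 : t 0 < t 1 := ht (show 0 ≤ n by omega) (show 1 ≤ n from hn) one_pos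
  have h1n : t 1 ≤ t n := ht.monotoneOn (show 1 ≤ n from hn) (show n ≤ n from le_rfl) hn
  obtain ⟨ξ, hξ, h⟩ := exists_Kd_eq_kker (j := 1) hα1 h01 h1n
  rw [Nat.sub_self, ht0, sub_zero] at hξ
  rw [h]
  exact kker_antitoneOn (by linarith) (by linarith) (show 0 < ξ by linarith [hξ.1])
    (show 0 < t n by linarith) hξ.2.le

lemma kker_le_sum_Kd_mul {β : ℝ} (hα0 : 0 < α) (hα1 : α < 1) (hβ0 : 0 < β) (hβ1 : β ≤ 1)
    (ht : StrictMonoOn t (Set.Iic n)) (ht0 : t 0 = 0) (hn : 1 ≤ n) :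
    kker (1 + β - α) (t n) ≤
      ∑ i ∈ Icc 1 n, Kd α t n i * (kker (1 + β) (t i) - kker (1 + β) (t (i - 1))) := by
  have hmem : ∀ {i}, i ≤ n → i ∈ Set.Iic n := fun h => h
  have hτ : 0 < t n := ht0 ▸ ht (hmem n.zero_le) (hmem le_rfl) (by omega)
  have hnonneg : ∀ i ≤ n, 0 ≤ t i := fun i hi =>
    ht0 ▸ ht.monotoneOn (hmem n.zero_le) (hmem hi) i.zero_le
  set F := fun s => kker (1 - α) (t n - s) * kker β s
  have hsplit : kker (1 + β - α) (t n) = ∑ i ∈ Icc 1 n, ∫ s in t (i - 1)..t i, F s := by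
    rw [sum_Icc_one_eq_sum_range]
    simp only [Nat.add_sub_cancel]
    rw [intervalIntegral.sum_integral_adjacent_intervals, ht0,
      integral_kker_sub_mul_kker (by linarith) hβ0 hτ, show 1 - α + β = 1 + β - α by ring]
    intro k hk
    refine (intervalIntegrable_kker_sub_mul_kker (by linarith) hβ0 hτ).mono_set ?_
    rw [Set.uIcc_of_le hτ.le, Set.uIcc_of_le (ht.monotoneOn (hmem (by omega)) (hmem hk) k.le_succ)]
    exact Set.Icc_subset_Icc (hnonneg k (by omega)) (ht.monotoneOn (hmem hk) (hmem le_rfl) hk)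
  rw [hsplit]
  refine sum_le_sum fun i hi => ?_
  obtain ⟨hi1, hin⟩ := mem_Icc.mp hi
  rw [Kd_eq_integral_div hα1]
  exact integral_kker_sub_mul_kker_le hβ0 hβ1 (by linarith) (by linarith)
    (hnonneg (i - 1) (by omega)) (ht (hmem (by omega)) (hmem hin) (by omega))
    (ht.monotoneOn (hmem hin) (hmem le_rfl) hin)

end DiscreteKernel

lemma sum_mul_le_sum_of_sum_mul_eq_one {P f g : ℕ → ℝ} {K : ℕ → ℕ → ℝ} {n : ℕ}
    (hP : ∀ j ∈ Icc 1 n, 0 ≤ P j) (hPK : ∀ i ∈ Icc 1 n, ∑ j ∈ Icc i n, P j * K j i = 1)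
    (hfg : ∀ j ∈ Icc 1 n, f j ≤ ∑ i ∈ Icc 1 j, K j i * g i) :
    ∑ j ∈ Icc 1 n, P j * f j ≤ ∑ i ∈ Icc 1 n, g i :=
  calc ∑ j ∈ Icc 1 n, P j * f j
      ≤ ∑ j ∈ Icc 1 n, ∑ i ∈ Icc 1 j, P j * (K j i * g i) := by
        simp only [← mul_sum]
        exact sum_le_sum fun j hj => mul_le_mul_of_nonneg_left (hfg j hj) (hP j hj)
    _ = ∑ i ∈ Icc 1 n, ∑ j ∈ Icc i n, P j * K j i * g i := by
        simp only [← mul_assoc]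
        exact sum_comm' fun j i => by simp only [mem_Icc]; omega
    _ = ∑ i ∈ Icc 1 n, g i :=
        sum_congr rfl fun i hi => by rw [← sum_mul, hPK i hi, one_mul]

section ComplementaryKernel

variable {α : ℝ} {t : ℕ → ℝ} {n i : ℕ}

lemma Pd_self : Pd α t n n = 1 / Kd α t n n := by
  rw [Pd, if_pos rfl]

lemma Pd_of_ne (h : i ≠ n) :
    Pd α t n i = 1 / Kd α t i i * ∑ j ∈ Ioc i n, Pd α t n j * (Kd α t j (i + 1) - Kd α t j i) := by
  rw [Pd, if_neg h, sum_attach (Ioc i n) fun j => Pd α t n j * (Kd α t j (i + 1) - Kd α t j i)]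

lemma sum_Pd_mul_Kd (hin : i ≤ n) (hK : ∀ j ∈ Icc i n, Kd α t j j ≠ 0) :
    ∑ j ∈ Icc i n, Pd α t n j * Kd α t j i = 1 := by
  induction hin using Nat.decreasingInduction with
  | self => rw [Icc_self, sum_singleton, Pd_self, one_div_mul_cancel (hK n (by simp))]
  | of_succ k hk ih =>
    have hKk : Kd α t k k ≠ 0 := hK k (mem_Icc.mpr ⟨le_rfl, hk.le⟩)
    rw [← Ioc_insert_left hk.le, sum_insert left_notMem_Ioc, Pd_of_ne hk.ne,
      one_div_mul_eq_div, div_mul_cancel₀ _ hKk, ← sum_add_distrib, ← Icc_add_one_left_eq_Ioc]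
    simp only [← mul_add, sub_add_cancel]
    exact ih fun j hj => hK j (Icc_subset_Icc_left k.le_succ hj)

lemma Pd_nonneg (hin : i ≤ n) (hK : ∀ j ∈ Icc i n, 0 < Kd α t j j)
    (hKmono : ∀ j ∈ Icc i n, ∀ l ∈ Ico i j, Kd α t j l ≤ Kd α t j (l + 1)) :
    ∀ j ∈ Icc i n, 0 ≤ Pd α t n j := by
  induction hin using Nat.decreasingInduction with
  | self =>
    intro j hj
    rw [Icc_self, mem_singleton] at hj
    rw [hj, Pd_self]
    exact one_div_nonneg.mpr (hK n (by simp)).le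
  | of_succ k hk ih =>
    have hsub : Icc (k + 1) n ⊆ Icc k n := Icc_subset_Icc_left k.le_succ
    have ih' := ih (fun j hj => hK j (hsub hj)) fun j hj l hl =>
      hKmono j (hsub hj) l (Ico_subset_Ico_left k.le_succ hl)
    intro j hj
    rcases eq_or_ne j k with rfl | hjk
    · rw [Pd_of_ne hk.ne]
      refine mul_nonneg (one_div_nonneg.mpr (hK j (by simp [hk.le])).le) (sum_nonneg fun l hl => ?_)
      rw [← Icc_add_one_left_eq_Ioc] at hl
      exact mul_nonneg (ih' l hl) (sub_nonneg.mpr (hKmono l (hsub hl) j (by simp at hl ⊢; omega)))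
    · exact ih' j (by simp at hj ⊢; omega)

lemma sum_Pd_mul_le_sum (hα0 : 0 < α) (hα1 : α < 1)
    (ht : StrictMonoOn t (Set.Iic n)) {f g : ℕ → ℝ}
    (hfg : ∀ j ∈ Icc 1 n, f j ≤ ∑ i ∈ Icc 1 j, Kd α t j i * g i) :
    ∑ j ∈ Icc 1 n, Pd α t n j * f j ≤ ∑ i ∈ Icc 1 n, g i := by
  have hlt : ∀ {i j}, i < j → j ≤ n → t i < t j := fun hij hj =>
    ht (show _ ≤ n by omega) (show _ ≤ n from hj) hij
  have hK : ∀ j ∈ Icc 1 n, 0 < Kd α t j j := fun j hj =>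
    Kd_pos hα1 (hlt (by grind) (mem_Icc.mp hj).2) le_rfl
  have hKmono : ∀ j ∈ Icc 1 n, ∀ l ∈ Ico 1 j, Kd α t j l ≤ Kd α t j (l + 1) := by
    intro j hj l hl
    simp only [mem_Icc, mem_Ico] at hj hl
    exact Kd_le_Kd_add_one hα0 hα1 (hlt (by omega) (by omega)) (hlt (by omega) (by omega))
      (ht.monotoneOn (show _ ≤ n by omega) (show _ ≤ n by omega) (by omega))
  rcases Nat.eq_zero_or_pos n with rfl | hn
  · simp
  exact sum_mul_le_sum_of_sum_mul_eq_one (Pd_nonneg hn hK hKmono)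
    (fun i hi => sum_Pd_mul_Kd (mem_Icc.mp hi).2 fun j hj =>
      (hK j (Icc_subset_Icc_left (mem_Icc.mp hi).1 hj)).ne') hfg

end ComplementaryKernel

theorem complementary_kernel_power_bound_general
    (α : ℝ) (N : ℕ) (t : ℕ → ℝ)
    (hα0 : 0 < α) (hα1 : α < 1)
    (ht0 : t 0 = 0)
    (hmono : ∀ j, j < N → t j < t (j + 1)) :
    ∀ n, 1 ≤ n → n ≤ N → ∀ m : ℕ, m ≤ Nat.floor (1 / α) →
      ∑ j ∈ Finset.Icc 1 n, Pd α t n j * kker (1 + (m : ℝ) * α - α) (t j)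
        ≤ kker (1 + (m : ℝ) * α) (t n) := by
  intro n hn hnN m hm
  have ht : StrictMonoOn t (Set.Iic n) :=
    strictMonoOn_Iic_of_lt_succ fun j hj => hmono j (by omega)
  have htj : ∀ j ∈ Icc 1 n, StrictMonoOn t (Set.Iic j) := fun j hj =>
    ht.mono (Set.Iic_subset_Iic.mpr (mem_Icc.mp hj).2)
  rcases Nat.eq_zero_or_pos m with rfl | hm0
  · simp only [CharP.cast_eq_zero, zero_mul, add_zero, kker_one]
    calc ∑ j ∈ Icc 1 n, Pd α t n j * kker (1 - α) (t j)
        ≤ ∑ i ∈ Icc 1 n, if i = 1 then 1 else 0 :=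
          sum_Pd_mul_le_sum hα0 hα1 ht fun j hj => by
            simpa [(mem_Icc.mp hj).1] using kker_le_Kd_one hα0 hα1 (htj j hj) ht0 (mem_Icc.mp hj).1
      _ = 1 := by simp [hn]
  · have hβ0 : 0 < (m : ℝ) * α := by positivity
    have hβ1 : (m : ℝ) * α ≤ 1 := by
      have := (Nat.cast_le (α := ℝ)).mpr hm |>.trans (Nat.floor_le (by positivity))
      rwa [le_div_iff₀ hα0] at this
    calc ∑ j ∈ Icc 1 n, Pd α t n j * kker (1 + m * α - α) (t j)
        ≤ ∑ i ∈ Icc 1 n, (kker (1 + m * α) (t i) - kker (1 + m * α) (t (i - 1))) :=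
          sum_Pd_mul_le_sum hα0 hα1 ht fun j hj =>
            kker_le_sum_Kd_mul hα0 hα1 hβ0 hβ1 (htj j hj) ht0 (mem_Icc.mp hj).1
      _ = kker (1 + m * α) (t n) := by
          rw [sum_Icc_one_sub (fun i => kker (1 + m * α) (t i)), ht0, kker_zero (by linarith),
            sub_zero]

/-- Lemma 3.2(c): `Σ_{j=1}^{n} P^{n,j}_α k_{1+mα-α}(t_j) ≤ k_{1+mα}(t_n)`
for every integer `0 ≤ m ≤ ⌊1/α⌋`. -/
theorem complementary_kernel_power_bound
    (α T : ℝ) (N : ℕ) (t : ℕ → ℝ)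
    (hα0 : 0 < α) (hα1 : α < 1) (hT : 0 < T)
    (ht0 : t 0 = 0) (htN : t N = T)
    (hmono : ∀ j, j < N → t j < t (j + 1)) :
    ∀ n, 1 ≤ n → n ≤ N → ∀ m : ℕ, m ≤ Nat.floor (1 / α) →
      ∑ j ∈ Finset.Icc 1 n, Pd α t n j * kker (1 + (m : ℝ) * α - α) (t j)
        ≤ kker (1 + (m : ℝ) * α) (t n) :=
  complementary_kernel_power_bound_general α N t hα0 hα1 ht0 hmono
end

section
/- Lemma 3.1, second (weighted) estimate: let α ∈ (0,1), let 0 = t_0 < ⋯ < t_N = T be a partition, let H be a real Hilbert space, and let B_0, …, B_N be bounded self-adjoint linear operators on H for which there are constants 0 < β_0 ≤ γ_0 with β_0‖x‖² ≤ ⟨B_j x, x⟩ ≤ γ_0‖x‖² for all x ∈ H and 0 ≤ j ≤ N. Then for every sequence φ^0, …, φ^N in H and every 1 ≤ n ≤ N, (1/2) Σ_{j=1}^{n} K^{n,j}_{1−α}( ⟨B_jφ^j,φ^j⟩ − ⟨B_{j−1}φ^{j−1},φ^{j−1}⟩ ) ≤ ⟨ Σ_{j=1}^{n} K^{n,j}_{1−α}(B_jφ^j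 − B_{j−1}φ^{j−1}), φ^n ⟩ − (1/2) Σ_{j=0}^{n−1} K^{n,j+1}_{1−α}( ⟨B_{j+1}φ^n,φ^n⟩ − ⟨B_jφ^n,φ^n⟩ ). -/
open Finset

/-!
Put `E_j = ⟨B_j (φ^j - φ^n), φ^j - φ^n⟩ ≥ 0`. Expanding with the symmetry of the `B_j`, the
right-hand side minus the left-hand side equals `-(1/2) ∑_j K^{n,j} (E_j - E_{j-1})`.
Since `k_{2-α}` is increasing and concave, the L1 kernels `j ↦ K^{n,j}` are nonnegative and
nondecreasing, so Abel summation bounds `∑_j K^{n,j} (E_j - E_{j-1})` by `K^{n,n} E_n = 0`.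
-/

theorem sum_mul_sub_pred_le_of_monotoneOn {R : Type*} [CommRing R] [LinearOrder R]
    [IsStrictOrderedRing R] {K e : ℕ → R} {n : ℕ} (hn : 1 ≤ n)
    (hK₁ : 0 ≤ K 1) (hK : MonotoneOn K (Set.Icc 1 n)) (he : ∀ j ≤ n, 0 ≤ e j) :
    ∑ j ∈ Icc 1 n, K j * (e j - e (j - 1)) ≤ K n * e n := by
  induction n, hn using Nat.le_induction with
  | base =>
    rw [Icc_self, sum_singleton, mul_sub]
    exact sub_le_self _ (mul_nonneg hK₁ (he 0 (by omega)))
  | succ m hm ih =>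
    have ih := ih (hK.mono (Set.Icc_subset_Icc_right m.le_succ)) fun j hj => he j (by omega)
    have hKm : K m ≤ K (m + 1) := hK ⟨hm, m.le_succ⟩ ⟨by omega, le_rfl⟩ m.le_succ
    rw [sum_Icc_succ_top (by omega), Nat.add_sub_cancel]
    nlinarith [he m m.le_succ]

theorem concaveOn_kker {β : ℝ} (h₁ : 1 ≤ β) (h₂ : β ≤ 2) :
    ConcaveOn ℝ (Set.Ici 0) (kker β) := by
  have hΓ : 0 ≤ (Real.Gamma β)⁻¹ := inv_nonneg.2 (Real.Gamma_pos_of_pos (by linarith)).le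
  unfold kker
  simpa only [div_eq_inv_mul, smul_eq_mul] using
    (Real.concaveOn_rpow (p := β - 1) (by linarith) (by linarith)).smul hΓ

theorem monotoneOn_kker {β : ℝ} (h₁ : 1 ≤ β) : MonotoneOn (kker β) (Set.Ici 0) :=
  fun _ hx _ _ hxy => div_le_div_of_nonneg_right
    (Real.monotoneOn_rpow_Ici_of_exponent_nonneg (by linarith) hx (hx.trans hxy) hxy)
    (Real.Gamma_pos_of_pos (by linarith)).le

section DiscreteKernel

variable {α : ℝ} {t : ℕ → ℝ} {n j : ℕ}

theorem Kd_nonneg (hα : α ≤ 1) (ht : MonotoneOn t (Set.Iic n)) (hjn : j ≤ n) :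
    0 ≤ Kd α t n j := by
  have hpred : t (j - 1) ≤ t j := ht (by simp; omega) (by simpa using hjn) (by omega)
  have htj : t j ≤ t n := ht (by simpa using hjn) (by simp) hjn
  refine div_nonneg (sub_nonneg.2 ?_) (sub_nonneg.2 hpred)
  exact monotoneOn_kker (by linarith) (by simpa using htj) (by simp; linarith) (by linarith)

theorem Kd_le_Kd_succ (hα₀ : 0 ≤ α) (hα₁ : α ≤ 1) (ht : StrictMonoOn t (Set.Iic n))
    (hj : 1 ≤ j) (hjn : j < n) : Kd α t n j ≤ Kd α t n (j + 1) := by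
  have mem : ∀ {i}, i ≤ n → i ∈ Set.Iic n := fun h => h
  have h₁ : t (j - 1) < t j := ht (mem (by omega)) (mem hjn.le) (by omega)
  have h₂ : t j < t (j + 1) := ht (mem hjn.le) (mem hjn) j.lt_succ_self
  have h₃ : t (j + 1) ≤ t n := ht.monotoneOn (mem hjn) (mem le_rfl) hjn
  -- `Kd α t n j` is the slope of `kker (2 - α)` over `[t n - t j, t n - t (j - 1)]`.
  have key := (concaveOn_kker (β := 2 - α) (by linarith) (by linarith)).slope_anti_adjacent
    (x := t n - t (j + 1)) (y := t n - t j) (z := t n - t (j - 1))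
    (by simp; linarith) (by simp; linarith) (by linarith) (by linarith)
  simpa only [Kd, Nat.add_sub_cancel, sub_sub_sub_cancel_left] using key

theorem monotoneOn_Kd (hα₀ : 0 ≤ α) (hα₁ : α ≤ 1) (ht : StrictMonoOn t (Set.Iic n)) :
    MonotoneOn (Kd α t n) (Set.Icc 1 n) :=
  monotoneOn_of_le_add_one Set.ordConnected_Icc fun _ _ hj hj' =>
    Kd_le_Kd_succ hα₀ hα₁ ht hj.1 hj'.2

end DiscreteKernel

theorem LinearMap.IsSymmetric.inner_map_sub_sub {E : Type*} [NormedAddCommGroup E]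
    [InnerProductSpace ℝ E] {T : E →ₗ[ℝ] E} (hT : T.IsSymmetric) (x y : E) :
    inner ℝ (T (x - y)) (x - y)
      = inner ℝ (T x) x - 2 * inner ℝ (T x) y + inner ℝ (T y) y := by
  have hyx : inner ℝ (T y) x = inner ℝ (T x) y := by rw [hT, real_inner_comm]
  simp only [map_sub, inner_sub_left, inner_sub_right, hyx]
  ring

theorem weighted_gap_eq {H : Type*} [NormedAddCommGroup H] [InnerProductSpace ℝ H]
    (B : ℕ → H →L[ℝ] H) (φ : ℕ → H) (K : ℕ → ℝ) {n : ℕ}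
    (hB : ∀ j ≤ n, (B j : H →ₗ[ℝ] H).IsSymmetric) :
    inner ℝ (∑ j ∈ Icc 1 n, K j • (B j (φ j) - B (j - 1) (φ (j - 1)))) (φ n)
        - (1 / 2) * ∑ j ∈ range n,
            K (j + 1) * (inner ℝ (B (j + 1) (φ n)) (φ n) - inner ℝ (B j (φ n)) (φ n))
        - (1 / 2) * ∑ j ∈ Icc 1 n,
            K j * (inner ℝ (B j (φ j)) (φ j) - inner ℝ (B (j - 1) (φ (j - 1))) (φ (j - 1)))
      = -(1 / 2) * ∑ j ∈ Icc 1 n, K j * (inner ℝ (B j (φ j - φ n)) (φ j - φ n)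
          - inner ℝ (B (j - 1) (φ (j - 1) - φ n)) (φ (j - 1) - φ n)) := by
  have hshift : ∑ j ∈ range n,
        K (j + 1) * (inner ℝ (B (j + 1) (φ n)) (φ n) - inner ℝ (B j (φ n)) (φ n))
      = ∑ j ∈ Icc 1 n,
        K j * (inner ℝ (B j (φ n)) (φ n) - inner ℝ (B (j - 1) (φ n)) (φ n)) := by
    rw [← Ico_add_one_right_eq_Icc, ← sum_Ico_add' _ 0 n 1]
    simp only [Nat.Ico_zero_eq_range, add_tsub_cancel_right]
  rw [hshift, sum_inner, mul_sum, mul_sum, mul_sum, ← sum_sub_distrib, ← sum_sub_distrib]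
  refine sum_congr rfl fun j hj => ?_
  have hj := mem_Icc.1 hj
  have hEj := (hB j (by omega)).inner_map_sub_sub (φ j) (φ n)
  have hEpred := (hB (j - 1) (by omega)).inner_map_sub_sub (φ (j - 1)) (φ n)
  simp only [ContinuousLinearMap.coe_coe] at hEj hEpred
  rw [hEj, hEpred, real_inner_smul_left, inner_sub_left]
  ring

theorem discrete_caputo_weighted_estimate_general
    {H : Type*} [NormedAddCommGroup H] [InnerProductSpace ℝ H]
    (α : ℝ) (N : ℕ) (t : ℕ → ℝ)
    (hα0 : 0 < α) (hα1 : α < 1)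
    (hmono : ∀ j, j < N → t j < t (j + 1))
    (B : ℕ → H →L[ℝ] H) (β₀ : ℝ)
    (hβ₀ : 0 < β₀)
    (hBsym : ∀ j, j ≤ N → ∀ x y : H, (inner ℝ (B j x) y : ℝ) = inner ℝ x (B j y))
    (hBlow : ∀ j, j ≤ N → ∀ x : H, β₀ * ‖x‖ ^ 2 ≤ (inner ℝ (B j x) x : ℝ))
    (φ : ℕ → H) :
    ∀ n, 1 ≤ n → n ≤ N →
      (1 / 2) * ∑ j ∈ Finset.Icc 1 n,
          Kd α t n j * ((inner ℝ (B j (φ j)) (φ j) : ℝ)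
            - (inner ℝ (B (j - 1) (φ (j - 1))) (φ (j - 1)) : ℝ))
        ≤ (inner ℝ (∑ j ∈ Finset.Icc 1 n,
              Kd α t n j • (B j (φ j) - B (j - 1) (φ (j - 1)))) (φ n) : ℝ)
          - (1 / 2) * ∑ j ∈ Finset.range n,
              Kd α t n (j + 1) * ((inner ℝ (B (j + 1) (φ n)) (φ n) : ℝ)
                - (inner ℝ (B j (φ n)) (φ n) : ℝ)) := by
  intro n hn hnN
  have ht : StrictMonoOn t (Set.Iic n) :=
    (strictMonoOn_Iic_of_lt_succ hmono).mono (Set.Iic_subset_Iic.2 hnN)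
  have hgap := sum_mul_sub_pred_le_of_monotoneOn hn (Kd_nonneg hα1.le ht.monotoneOn hn)
    (monotoneOn_Kd hα0.le hα1.le ht)
    (e := fun j => inner ℝ (B j (φ j - φ n)) (φ j - φ n))
    fun j hj => (mul_nonneg hβ₀.le (sq_nonneg _)).trans (hBlow j (hj.trans hnN) _)
  rw [← sub_nonneg, weighted_gap_eq B φ _ fun j hj => hBsym j (hj.trans hnN)]
  simp only [sub_self, map_zero, inner_zero_left, mul_zero] at hgap
  linarith

/-- Lemma 3.1, second (weighted) estimate: for bounded self-adjoint operators
`B_0, …, B_N` on a real Hilbert space `H` with `β₀‖x‖² ≤ ⟨B_j x, x⟩ ≤ γ₀‖x‖²`, and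
any `φ^0, …, φ^N` in `H`, for `1 ≤ n ≤ N`:
`(1/2) D^α_{t_n} ⟨B_n φ^n, φ^n⟩ ≤ ⟨D^α_{t_n}(B_n φ^n), φ^n⟩
  - (1/2) Σ_{j=0}^{n-1} K^{n,j+1}_{1-α} (⟨B_{j+1}φ^n,φ^n⟩ - ⟨B_j φ^n,φ^n⟩)`. -/
theorem discrete_caputo_weighted_estimate
    {H : Type*} [NormedAddCommGroup H] [InnerProductSpace ℝ H] [CompleteSpace H]
    (α T : ℝ) (N : ℕ) (t : ℕ → ℝ)
    (hα0 : 0 < α) (hα1 : α < 1) (hT : 0 < T)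
    (ht0 : t 0 = 0) (htN : t N = T)
    (hmono : ∀ j, j < N → t j < t (j + 1))
    (B : ℕ → H →L[ℝ] H) (β₀ γ₀ : ℝ)
    (hβ₀ : 0 < β₀) (hβγ : β₀ ≤ γ₀)
    (hBsym : ∀ j, j ≤ N → ∀ x y : H, (inner ℝ (B j x) y : ℝ) = inner ℝ x (B j y))
    (hBlow : ∀ j, j ≤ N → ∀ x : H, β₀ * ‖x‖ ^ 2 ≤ (inner ℝ (B j x) x : ℝ))
    (hBup : ∀ j, j ≤ N → ∀ x : H, (inner ℝ (B j x) x : ℝ) ≤ γ₀ * ‖x‖ ^ 2)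
    (φ : ℕ → H) :
    ∀ n, 1 ≤ n → n ≤ N →
      (1 / 2) * ∑ j ∈ Finset.Icc 1 n,
          Kd α t n j * ((inner ℝ (B j (φ j)) (φ j) : ℝ)
            - (inner ℝ (B (j - 1) (φ (j - 1))) (φ (j - 1)) : ℝ))
        ≤ (inner ℝ (∑ j ∈ Finset.Icc 1 n,
              Kd α t n j • (B j (φ j) - B (j - 1) (φ (j - 1)))) (φ n) : ℝ)
          - (1 / 2) * ∑ j ∈ Finset.range n,
              Kd α t n (j + 1) * ((inner ℝ (B (j + 1) (φ n)) (φ n) : ℝ)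
                - (inner ℝ (B j (φ n)) (φ n) : ℝ)) :=
  discrete_caputo_weighted_estimate_general α N t hα0 hα1 hmono B β₀ hβ₀ hBsym hBlow φ
end
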